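/- In the concrete autonomous-car model, the set of achievement-cause indices of the causal setting with narrative σ1 started in the epistemic alternative S0* and effect damaged is exactly {0, 1}; that is, AchCause σ1 S0* (fun s => s.damaged = true) i holds if and only if i ∈ {0, 1}. In particular the achievement causal chain consists only of turn J executed after 1 action and drive I J executed in the initial situation; hack, drive J K, and turn K are not achievement causes in this epistemic alternative. -/
import Mathlib


inductive Loc : Type
  | I | J | K
deriving DecidableEq

open Loc

def connected : Loc → Loc → Prop
  | I, J => True
  | J, I => True
  | J, K => True
  | K, J => True
  | _, _ => False

inductive Act : Type
  | drive (i j : Loc)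
  | turn (i : Loc)
  | hack
deriving DecidableEq

open Act

structure State : Type where
  pos : Loc
  corrupted : Bool
  damaged : Bool

def step : Act → State → State
  | drive _ j, s => ⟨j, s.corrupted, s.damaged⟩
  | turn _, s => ⟨s.pos, s.corrupted, s.corrupted || s.damaged⟩
  | hack, s => ⟨s.pos, true, s.damaged⟩

def poss : Act → State → Prop
  | drive i j, s => s.pos = i ∧ i ≠ j ∧ connected i j
  | turn i, s => s.pos = i
  | hack, _ => True

def run (l : List Act) (s : State) : State :=
  l.foldl (fun t a => step a t) s

def executable (l : List Act) (s : State) : Prop :=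
  ∀ k : Fin l.length, poss (l.get k) (run (l.take k) s)

def σ1 : List Act := [drive I J, turn J, hack, drive J K, turn K]

def S0 : State := ⟨I, false, false⟩

def S0star : State := ⟨I, true, false⟩

def AchCause : List Act → State → (State → Prop) → ℕ → Prop
  | l, s0, φ, i =>
    ∃ j, ∃ _h1 : 1 ≤ j, ∃ _h2 : j ≤ l.length,
      ¬ φ (run (l.take (j - 1)) s0) ∧
      (∀ k, j ≤ k → k ≤ l.length → φ (run (l.take k) s0)) ∧
      (i = j - 1 ∨
        AchCause (l.take (j - 1)) s0
          (fun s => φ (step (l.get ⟨j - 1, by omega⟩) s) ∧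
            poss (l.get ⟨j - 1, by omega⟩) s) i)
  termination_by l _ _ _ => l.length
  decreasing_by simp [List.length_take]; omega

/-- the achievement-cause indices of ⟨σ1, S0*, damaged⟩ are exactly {0, 1}. -/
theorem achCause_sigma1_S0star :
    ∀ i : ℕ, AchCause σ1 S0star (fun s => s.damaged = true) i ↔ i ∈ ({0, 1} : Set ℕ) := by
  intro i
  constructor
  · intro h
    rw [AchCause] at h
    obtain ⟨j, h1, h2, hneg, hall, hor⟩ := h
    simp only [σ1, List.length_cons, List.length_nil] at h2
    interval_cases j
    · exact absurd (hall 1 le_rfl (by simp [σ1])) (by simp [σ1, run, step, S0star])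
    · rcases hor with hi | hrec
      · right; simp [hi]
      · rw [AchCause] at hrec
        obtain ⟨j', h1', h2', hneg', hall', hor'⟩ := hrec
        simp only [σ1, List.take, List.length_cons, List.length_nil] at h2'
        interval_cases j'
        rcases hor' with hi | hrec'
        · left; simp [hi]
        · rw [AchCause] at hrec'
          obtain ⟨j'', h1'', h2'', _⟩ := hrec'
          simp at h2''
          omega
    · exact absurd hneg (by simp [σ1, run, step, S0star])
    · exact absurd hneg (by simp [σ1, run, step, S0star])
    · exact absurd hneg (by simp [σ1, run, step, S0star])
  · intro hi
    rcases hi with hi | hi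
    · -- i = 0
      subst hi
      rw [AchCause]
      refine ⟨2, by norm_num, by simp [σ1], ?_, ?_, Or.inr ?_⟩
      · simp [σ1, run, step, S0star]
      · intro k hk1 hk2
        simp only [σ1, List.length_cons, List.length_nil] at hk2
        interval_cases k <;> simp [σ1, run, step, S0star]
      · rw [AchCause]
        refine ⟨1, le_rfl, by simp [σ1], ?_, ?_, Or.inl rfl⟩
        · simp [σ1, run, step, poss, S0star]
        · intro k hk1 hk2
          simp only [σ1, List.take, List.length_cons, List.length_nil] at hk2
          interval_cases k
          simp [σ1, run, step, poss, S0star, connected]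
    · -- i = 1
      simp only [Set.mem_singleton_iff] at hi
      subst hi
      rw [AchCause]
      refine ⟨2, by norm_num, by simp [σ1], ?_, ?_, Or.inl rfl⟩
      · simp [σ1, run, step, S0star]
      · intro k hk1 hk2
        simp only [σ1, List.length_cons, List.length_nil] at hk2
        interval_cases k <;> simp [σ1, run, step, S0star]
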